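/- arXiv:2503.09440 — 4 statements merged into one kernel-verified Lean document; each statement's English description precedes it below -/
import Mathlib

section
/- If a finite simple graph G has a strong elimination order v₁,…,vₙ (n ≥ 1), then G has a compatible tree representation {T(v)} whose host tree has exactly n nodes, namely the pairwise distinct roots 𝐯₁,…,𝐯ₙ of the subtrees T(v₁),…,T(vₙ), in which the root 𝐯ⱼ has depth n−j for every j ∈ {1,…,n}; moreover the representation can be chosen so that T(vₗ) overshadows T(vₖ) whenever k < ℓ. -/
/-- A host tree: a finite tree (connected acyclic simple graph on a nonempty
finite node set) with a distinguished root and positive real edge weights. -/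
structure HostTree where
  V : Type
  [fintypeV : Fintype V]
  [nonemptyV : Nonempty V]
  G : SimpleGraph V
  isTree : G.IsTree
  root : V
  w : V → V → ℝ
  w_symm : ∀ x y : V, w x y = w y x
  w_pos : ∀ x y : V, G.Adj x y → 0 < w x y

attribute [instance] HostTree.fintypeV HostTree.nonemptyV

/-- The unique path in the host tree from the root to a node. -/
noncomputable def HostTree.rootPath (T : HostTree) (x : T.V) : T.G.Walk T.root x :=
  (T.isTree.existsUnique_path T.root x).choose

/-- The depth of a node: the sum of the weights of the edges on the unique
path from the root to the node. -/
noncomputable def HostTree.depth (T : HostTree) (x : T.V) : ℝ :=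
  ((T.rootPath x).darts.map (fun d => T.w d.toProd.1 d.toProd.2)).sum

/-- A subtree of the host tree: a nonempty set of nodes inducing a connected
subgraph. -/
def HostTree.IsSubtree (T : HostTree) (S : Set T.V) : Prop :=
  S.Nonempty ∧ (T.G.induce S).Connected

/-- `S₁` overshadows `S₂`: every node of `S₂ \ S₁` has strictly greater depth
than every node of `S₂ ∩ S₁`. -/
def HostTree.Overshadows (T : HostTree) (S₁ S₂ : Set T.V) : Prop :=
  ∀ x ∈ S₂ \ S₁, ∀ y ∈ S₂ ∩ S₁, T.depth y < T.depth x

/-- Two subtrees are compatible if one overshadows the other. -/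
def HostTree.CompatiblePair (T : HostTree) (S₁ S₂ : Set T.V) : Prop :=
  T.Overshadows S₁ S₂ ∨ T.Overshadows S₂ S₁

/-- `x` is the root of the subtree `S`: a node of `S` of minimum depth. -/
def HostTree.IsSubtreeRoot (T : HostTree) (S : Set T.V) (x : T.V) : Prop :=
  x ∈ S ∧ ∀ y ∈ S, T.depth x ≤ T.depth y

/-- The closed neighbourhood `N[v]` of a vertex. -/
def closedNbhd {α : Type*} (G : SimpleGraph α) (v : α) : Set α :=
  insert v (G.neighborSet v)

/-- A tree representation of `G`: a subtree `t v` of the host tree for every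
vertex `v`, such that distinct vertices are adjacent iff their subtrees meet. -/
def IsTreeRep {α : Type*} (G : SimpleGraph α) (T : HostTree) (t : α → Set T.V) : Prop :=
  (∀ v : α, T.IsSubtree (t v)) ∧
  ∀ u v : α, u ≠ v → (G.Adj u v ↔ (t u ∩ t v).Nonempty)

/-- A compatible tree representation: a tree representation all of whose
subtrees are pairwise compatible. -/
def IsCompatibleTreeRep {α : Type*} (G : SimpleGraph α) (T : HostTree)
    (t : α → Set T.V) : Prop :=
  IsTreeRep G T t ∧ ∀ u v : α, T.CompatiblePair (t u) (t v)

/-- A strong elimination order. -/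
def IsStrongElimOrder {α : Type*} (G : SimpleGraph α) {n : ℕ} (σ : Fin n ≃ α) : Prop :=
  ∀ i j k l : Fin n, i < j → k < l →
    σ k ∈ closedNbhd G (σ i) → σ l ∈ closedNbhd G (σ i) →
    σ k ∈ closedNbhd G (σ j) → σ l ∈ closedNbhd G (σ j)

/-!
Put the vertices in elimination order on the nodes `0 < 1 < ⋯ < n - 1` and join every node `i`
to its *next neighbour*: the least `k > i` with `vₖ ∈ N[vᵢ]`, or the top node `n - 1` if there is
none. Each node has at most one larger neighbour, so this is a tree; rooted at the top node with
edge weights `|i - j|`, node `i` has depth `n - 1 - i`. Let `T(vⱼ)` be the set of nodes `i ≤ j`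
with `vᵢ ∈ N[vⱼ]`. The strong elimination property says exactly that the next neighbour of a
node of `T(vⱼ)` below `j` is again in `T(vⱼ)`, so `T(vⱼ)` is a subtree with root `j`; it also
says that for `k < ℓ` the nodes of `T(vₖ) ∩ T(vₗ)` lie above those of `T(vₖ) \ T(vₗ)`, which is
overshadowing.
-/

open SimpleGraph

section ParentGraph

variable {α : Type*} [LinearOrder α]

theorem SimpleGraph.isAcyclic_fromRel_apply_eq (p : α → α) (hp : ∀ a, a ≤ p a) :
    (fromRel fun a b => p a = b).IsAcyclic := by
  classical
  intro v c hc
  obtain ⟨x, hx, hmin⟩ :=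
    c.support.toFinset.exists_min_image id ⟨v, List.mem_toFinset.mpr c.start_mem_support⟩
  rw [List.mem_toFinset] at hx
  -- the least vertex of a cycle has two neighbours on it, both larger, hence both equal to `p x`
  have hsub : c.toSubgraph.neighborSet x ⊆ {p x} := by
    intro y hy
    have hyc : y ∈ c.support := c.mem_verts_toSubgraph.mp (Subgraph.Adj.snd_mem hy)
    obtain ⟨hne, hxy | hyx⟩ := (fromRel_adj _ x y).mp (Subgraph.Adj.adj_sub hy)
    · exact hxy.symm
    · exact absurd (le_antisymm (hyx ▸ hp y) (hmin y (List.mem_toFinset.mpr hyc))) hne.symm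
  have := Set.ncard_le_ncard hsub (Set.finite_singleton _)
  rw [hc.ncard_neighborSet_toSubgraph_eq_two hx, Set.ncard_singleton] at this
  omega

theorem SimpleGraph.induce_connected_of_exists_adj_gt [WellFoundedGT α] {G : SimpleGraph α}
    {S : Set α} {j : α} (hj : j ∈ S) (hstep : ∀ x ∈ S, x ≠ j → ∃ y ∈ S, x < y ∧ G.Adj x y) :
    (G.induce S).Connected := by
  have hreach : ∀ x (hx : x ∈ S), (G.induce S).Reachable ⟨x, hx⟩ ⟨j, hj⟩ := by
    intro x
    induction x using WellFoundedGT.induction with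
    | _ x ih =>
      intro hx
      by_cases hxj : x = j
      · subst hxj; rfl
      obtain ⟨y, hy, hxy, hadj⟩ := hstep x hx hxj
      exact (show (G.induce S).Adj ⟨x, hx⟩ ⟨y, hy⟩ from hadj).reachable.trans (ih y hxy hy)
  have : Nonempty S := ⟨⟨j, hj⟩⟩
  exact Connected.mk fun ⟨x, hx⟩ ⟨y, hy⟩ => (hreach x hx).trans (hreach y hy).symm

end ParentGraph

theorem HostTree.depth_eq_of_isPath (T : HostTree) {x : T.V} (q : T.G.Walk x T.root)
    (hq : q.IsPath) : T.depth x = (q.darts.map fun d => T.w d.fst d.snd).sum := by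
  have hroot : T.rootPath x = q.reverse :=
    (T.isTree.existsUnique_path T.root x).unique
      (T.isTree.existsUnique_path T.root x).choose_spec.1 hq.reverse
  rw [HostTree.depth, hroot, Walk.darts_reverse, List.map_reverse, List.sum_reverse,
    List.map_map]
  exact congrArg List.sum (List.map_congr_left fun d _ => T.w_symm _ _)

section ParentHostTree

variable {m : ℕ} (p : Fin (m + 1) → Fin (m + 1)) (hle : ∀ i, i ≤ p i)
  (hlt : ∀ i, i ≠ Fin.last m → i < p i)

include hlt in
theorem exists_isPath_fromRel_to_last (x : Fin (m + 1)) :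
    ∃ q : (fromRel fun i j => p i = j).Walk x (Fin.last m), q.IsPath ∧ (∀ y ∈ q.support, x ≤ y) ∧
      (q.darts.map fun d => |((d.fst : ℕ) : ℝ) - (d.snd : ℕ)|).sum = m - x := by
  induction x using WellFoundedGT.induction with
  | _ x ih =>
    by_cases hx : x = Fin.last m
    · subst hx
      exact ⟨.nil, .nil, by simp, by simp⟩
    have hxp := hlt x hx
    obtain ⟨q, hq, hsupp, hsum⟩ := ih (p x) hxp
    have hadj : (fromRel fun i j => p i = j).Adj x (p x) :=
      (fromRel_adj _ _ _).mpr ⟨hxp.ne, .inl rfl⟩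
    refine ⟨.cons hadj q, (Walk.cons_isPath_iff _ _).mpr ⟨hq, fun h => (hsupp x h).not_gt hxp⟩,
      ?_, ?_⟩
    · simp only [Walk.support_cons, List.mem_cons, forall_eq_or_imp, le_rfl, true_and]
      exact fun y hy => hxp.le.trans (hsupp y hy)
    · have hxp' : ((x : ℕ) : ℝ) < (p x : ℕ) := by exact_mod_cast hxp
      simp only [Walk.darts_cons, List.map_cons, List.sum_cons, hsum, abs_of_neg (sub_neg.mpr hxp')]
      ring

noncomputable def parentHostTree : HostTree where
  V := Fin (m + 1)
  G := fromRel fun i j => p i = j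
  isTree := by
    refine ⟨(induceUnivIso _).connected_iff.mp ?_, isAcyclic_fromRel_apply_eq p hle⟩
    refine induce_connected_of_exists_adj_gt (Set.mem_univ (Fin.last m)) fun x _ hx => ?_
    exact ⟨p x, Set.mem_univ _, hlt x hx, (fromRel_adj _ _ _).mpr ⟨(hlt x hx).ne, .inl rfl⟩⟩
  root := Fin.last m
  w i j := |((i : ℕ) : ℝ) - (j : ℕ)|
  w_symm _ _ := abs_sub_comm _ _
  w_pos i j h := abs_pos.mpr (sub_ne_zero.mpr (by exact_mod_cast Fin.val_ne_of_ne h.ne))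

theorem depth_parentHostTree (x : Fin (m + 1)) :
    (parentHostTree p hle hlt).depth x = m - x := by
  obtain ⟨q, hq, -, hsum⟩ := exists_isPath_fromRel_to_last p hlt x
  exact ((parentHostTree p hle hlt).depth_eq_of_isPath q hq).trans hsum

end ParentHostTree

def IsStrongElimRel {ι : Type*} [Preorder ι] (r : ι → ι → Prop) : Prop :=
  ∀ ⦃i j k l⦄, i < j → k < l → r i k → r i l → r j k → r j l

section NextNbr

variable {m : ℕ} {r : Fin (m + 1) → Fin (m + 1) → Prop} {i j : Fin (m + 1)}

open Classical in
noncomputable def nextNbr (r : Fin (m + 1) → Fin (m + 1) → Prop) (i : Fin (m + 1)) :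
    Fin (m + 1) :=
  if h : {k | i < k ∧ r i k}.Nonempty then wellFounded_lt.min _ h else Fin.last m

theorem nextNbr_spec (h : {k | i < k ∧ r i k}.Nonempty) : i < nextNbr r i ∧ r i (nextNbr r i) := by
  rw [nextNbr, dif_pos h]
  exact wellFounded_lt.min_mem _ h

theorem nextNbr_le (hij : i < j) (h : r i j) : nextNbr r i ≤ j := by
  rw [nextNbr, dif_pos ⟨j, hij, h⟩]
  exact not_lt.mp (wellFounded_lt.not_lt_min {k | i < k ∧ r i k} ⟨hij, h⟩)

theorem le_nextNbr (i : Fin (m + 1)) : i ≤ nextNbr r i := by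
  by_cases h : {k | i < k ∧ r i k}.Nonempty
  · exact (nextNbr_spec h).1.le
  · rw [nextNbr, dif_neg h]
    exact Fin.le_last i

theorem lt_nextNbr (hi : i ≠ Fin.last m) : i < nextNbr r i := by
  by_cases h : {k | i < k ∧ r i k}.Nonempty
  · exact (nextNbr_spec h).1
  · rw [nextNbr, dif_neg h]
    exact Fin.lt_last_iff_ne_last.mpr hi

theorem rel_nextNbr_of_rel (hrefl : ∀ i, r i i) (hr : IsStrongElimRel r) (hij : i < j)
    (h : r i j) : r (nextNbr r i) j := by
  obtain hj | hlt := (nextNbr_le hij h).eq_or_lt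
  · exact hj ▸ hrefl j
  · obtain ⟨hi, hnext⟩ := nextNbr_spec ⟨j, hij, h⟩
    exact hr hi hlt hnext h (hrefl _)

end NextNbr

section ElimHostTree

variable {m : ℕ} {r : Fin (m + 1) → Fin (m + 1) → Prop}

noncomputable def elimHostTree (r : Fin (m + 1) → Fin (m + 1) → Prop) : HostTree :=
  parentHostTree (nextNbr r) le_nextNbr fun _ => lt_nextNbr

/-- The nodes of the subtree `T(vⱼ)`. -/
def lowerNbhd (r : Fin (m + 1) → Fin (m + 1) → Prop) (j : Fin (m + 1)) : Set (Fin (m + 1)) :=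
  {i | i ≤ j ∧ r i j}

theorem depth_elimHostTree (x : Fin (m + 1)) : (elimHostTree r).depth x = m - x :=
  depth_parentHostTree _ _ _ x

theorem depth_lt_depth_elimHostTree {x y : Fin (m + 1)} :
    (elimHostTree r).depth x < (elimHostTree r).depth y ↔ y < x := by
  rw [depth_elimHostTree, depth_elimHostTree, sub_lt_sub_iff_left, Nat.cast_lt, Fin.val_fin_lt]

theorem isSubtreeRoot_lowerNbhd (hrefl : ∀ i, r i i) (j : Fin (m + 1)) :
    (elimHostTree r).IsSubtreeRoot (lowerNbhd r j) j :=
  ⟨⟨le_rfl, hrefl j⟩, fun _ hy => not_lt.mp (depth_lt_depth_elimHostTree.not.mpr hy.1.not_gt)⟩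

theorem isSubtree_lowerNbhd (hrefl : ∀ i, r i i) (hr : IsStrongElimRel r) (j : Fin (m + 1)) :
    (elimHostTree r).IsSubtree (lowerNbhd r j) := by
  show (lowerNbhd r j).Nonempty ∧ ((fromRel fun a b => nextNbr r a = b).induce _).Connected
  refine ⟨⟨j, le_rfl, hrefl j⟩, induce_connected_of_exists_adj_gt ⟨le_rfl, hrefl j⟩ ?_⟩
  rintro x ⟨hxj, hx⟩ hne
  have hlt := lt_of_le_of_ne hxj hne
  refine ⟨nextNbr r x, ⟨nextNbr_le hlt hx, rel_nextNbr_of_rel hrefl hr hlt hx⟩, lt_nextNbr ?_, ?_⟩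
  · exact (hlt.trans_le (Fin.le_last j)).ne
  · exact (fromRel_adj _ _ _).mpr ⟨(lt_nextNbr (hlt.trans_le (Fin.le_last j)).ne).ne, .inl rfl⟩

theorem overshadows_lowerNbhd (hr : IsStrongElimRel r) {k l : Fin (m + 1)} (hkl : k ≤ l) :
    (elimHostTree r).Overshadows (lowerNbhd r l) (lowerNbhd r k) := by
  rintro x ⟨⟨hxk, hx⟩, hxl⟩ y ⟨⟨-, hy⟩, hyl⟩
  refine depth_lt_depth_elimHostTree.mpr (lt_of_not_ge fun hyx => hxl ⟨hxk.trans hkl, ?_⟩)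
  obtain rfl | hyx := hyx.eq_or_lt
  · exact hyl.2
  obtain rfl | hkl := hkl.eq_or_lt
  · exact hx
  · exact hr hyx hkl hy hyl.2 hx

theorem lowerNbhd_inter_nonempty_iff_of_lt (hrefl : ∀ i, r i i) (hsymm : ∀ i j, r i j → r j i)
    (hr : IsStrongElimRel r) {i j : Fin (m + 1)} (hij : i < j) :
    (lowerNbhd r i ∩ lowerNbhd r j).Nonempty ↔ r i j := by
  refine ⟨fun ⟨x, ⟨hxi, hx⟩, hxj, hx'⟩ => ?_, fun h => ⟨i, ⟨le_rfl, hrefl i⟩, hij.le, h⟩⟩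
  obtain rfl | hxi := hxi.eq_or_lt
  · exact hx'
  · exact hr hxi (hxi.trans hij) (hrefl x) hx' (hsymm x i hx)

theorem lowerNbhd_inter_nonempty_iff (hrefl : ∀ i, r i i) (hsymm : ∀ i j, r i j → r j i)
    (hr : IsStrongElimRel r) {i j : Fin (m + 1)} (hij : i ≠ j) :
    (lowerNbhd r i ∩ lowerNbhd r j).Nonempty ↔ r i j := by
  obtain hij | hji := hij.lt_or_gt
  · exact lowerNbhd_inter_nonempty_iff_of_lt hrefl hsymm hr hij
  · rw [Set.inter_comm, lowerNbhd_inter_nonempty_iff_of_lt hrefl hsymm hr hji]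
    exact ⟨hsymm j i, hsymm i j⟩

end ElimHostTree

theorem strongElimOrder_to_compatibleTreeRep_general {α : Type}
    (G : SimpleGraph α) {n : ℕ} (hn : 1 ≤ n) (σ : Fin n ≃ α)
    (hσ : IsStrongElimOrder G σ) :
    ∃ (T : HostTree) (t : α → Set T.V) (rt : α → T.V),
      IsCompatibleTreeRep G T t ∧
      (∀ v : α, T.IsSubtreeRoot (t v) (rt v)) ∧
      Function.Bijective rt ∧
      Fintype.card T.V = n ∧
      (∀ j : Fin n, T.depth (rt (σ j)) = (n : ℝ) - ((j : ℕ) + 1)) ∧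
      (∀ k l : Fin n, k < l → T.Overshadows (t (σ l)) (t (σ k))) := by
  obtain ⟨m, rfl⟩ : ∃ m, n = m + 1 := ⟨n - 1, by omega⟩
  set r : Fin (m + 1) → Fin (m + 1) → Prop := fun i j => σ j ∈ closedNbhd G (σ i)
  have hrefl : ∀ i, r i i := fun i => Set.mem_insert _ _
  have hsymm : ∀ i j, r i j → r j i := fun i j => by
    rintro (h | h)
    exacts [.inl h.symm, .inr h.symm]
  have hr : IsStrongElimRel r := fun i j k l => hσ i j k l
  have hadj : ∀ {a b}, a ≠ b → (r a b ↔ G.Adj (σ a) (σ b)) := fun hab =>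
    or_iff_right fun h => hab (σ.injective h).symm
  refine ⟨elimHostTree r, fun v => lowerNbhd r (σ.symm v), σ.symm,
    ⟨⟨fun v => isSubtree_lowerNbhd hrefl hr _, fun u v huv => ?_⟩, fun u v => ?_⟩,
    fun v => isSubtreeRoot_lowerNbhd hrefl _, σ.symm.bijective, Fintype.card_fin _,
    fun j => ?_, fun k l hkl => ?_⟩
  · obtain ⟨a, rfl⟩ := σ.surjective u
    obtain ⟨b, rfl⟩ := σ.surjective v
    have hab : a ≠ b := fun h => huv (congrArg σ h)
    simp only [Equiv.symm_apply_apply, ← hadj hab]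
    exact (lowerNbhd_inter_nonempty_iff hrefl hsymm hr hab).symm
  · obtain h | h := le_total (σ.symm u) (σ.symm v)
    exacts [.inr (overshadows_lowerNbhd hr h), .inl (overshadows_lowerNbhd hr h)]
  · rw [Equiv.symm_apply_apply, depth_elimHostTree]
    push_cast
    ring
  · simpa only [Equiv.symm_apply_apply] using overshadows_lowerNbhd hr hkl.le

/-- If `G` has a strong elimination order `v₁,…,vₙ`, then it has a compatible
tree representation whose host tree has exactly the `n` pairwise distinct
subtree roots as nodes, with the root of `T(vⱼ)` at depth `n - j`, and with
`T(vₗ)` overshadowing `T(vₖ)` whenever `k < ℓ`. -/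
theorem strongElimOrder_to_compatibleTreeRep {α : Type} [Fintype α]
    (G : SimpleGraph α) {n : ℕ} (hn : 1 ≤ n) (σ : Fin n ≃ α)
    (hσ : IsStrongElimOrder G σ) :
    ∃ (T : HostTree) (t : α → Set T.V) (rt : α → T.V),
      IsCompatibleTreeRep G T t ∧
      (∀ v : α, T.IsSubtreeRoot (t v) (rt v)) ∧
      Function.Bijective rt ∧
      Fintype.card T.V = n ∧
      (∀ j : Fin n, T.depth (rt (σ j)) = (n : ℝ) - ((j : ℕ) + 1)) ∧
      (∀ k l : Fin n, k < l → T.Overshadows (t (σ l)) (t (σ k))) :=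
  strongElimOrder_to_compatibleTreeRep_general G hn σ hσ
end

section
/- Let G be a finite simple graph with at least one vertex that has a compatible tree representation {T(v)}. Then any vertex v that maximizes the depth d(𝐯) of the root of its subtree is a simple vertex of G; in particular, G has a simple vertex. -/
/-- A simple vertex: the closed neighbourhoods of the vertices of `N[v]` are
linearly ordered by inclusion. -/
def IsSimpleVertex {α : Type*} (G : SimpleGraph α) (v : α) : Prop :=
  ∀ u₁ ∈ closedNbhd G v, ∀ u₂ ∈ closedNbhd G v,
    closedNbhd G u₁ ⊆ closedNbhd G u₂ ∨ closedNbhd G u₂ ⊆ closedNbhd G u₁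

/-!
Let `v` be a vertex whose subtree root `r` is as deep as possible. Of two intersecting
subtrees, the one with the deeper root contains the other's root; hence `r` lies in `T(u)`
for every `u ∈ N[v]`. Now let `a, b ∈ N[v]` with `T(b)` overshadowing `T(a)`, and let `T(w)`
meet `T(a)`. The deeper of the roots of `T(a)` and `T(w)` lies in `T(a) ∩ T(w)` and is no
deeper than `r ∈ T(a) ∩ T(b)`, so overshadowing puts it in `T(b)` too. Thus `N[a] ⊆ N[b]`,
and compatibility makes the closed neighbourhoods of `N[v]` a chain.
-/

open SimpleGraph

namespace HostTree

open scoped Classical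

variable (T : HostTree)

lemma rootPath_isPath (x : T.V) : (T.rootPath x).IsPath :=
  (T.isTree.existsUnique_path T.root x).choose_spec.1

lemma eq_of_isPath {x y : T.V} {p q : T.G.Walk x y} (hp : p.IsPath) (hq : q.IsPath) :
    p = q :=
  (T.isTree.existsUnique_path x y).unique hp hq

noncomputable def weight {x y : T.V} (p : T.G.Walk x y) : ℝ :=
  (p.darts.map (fun d => T.w d.toProd.1 d.toProd.2)).sum

lemma depth_eq_weight (x : T.V) : T.depth x = T.weight (T.rootPath x) := rfl

lemma weight_append {x y z : T.V} (p : T.G.Walk x y) (q : T.G.Walk y z) :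
    T.weight (p.append q) = T.weight p + T.weight q := by
  simp [weight, Walk.darts_append]

lemma weight_nonneg {x y : T.V} (p : T.G.Walk x y) : 0 ≤ T.weight p :=
  List.sum_nonneg fun _ hc => by
    obtain ⟨d, -, rfl⟩ := List.mem_map.mp hc
    exact (T.w_pos _ _ d.adj).le

lemma weight_pos {x y : T.V} (p : T.G.Walk x y) (hxy : x ≠ y) : 0 < T.weight p := by
  cases p with
  | nil => exact absurd rfl hxy
  | cons h q =>
    simp only [weight, Walk.darts_cons, List.map_cons, List.sum_cons]
    exact add_pos_of_pos_of_nonneg (T.w_pos _ _ h) (T.weight_nonneg q)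

def IsAncestor (a b : T.V) : Prop := a ∈ (T.rootPath b).support

variable {T}

lemma isAncestor_refl (a : T.V) : T.IsAncestor a a := Walk.end_mem_support _

lemma takeUntil_rootPath {a b : T.V} (h : T.IsAncestor a b) :
    (T.rootPath b).takeUntil a h = T.rootPath a :=
  T.eq_of_isPath ((T.rootPath_isPath b).takeUntil h) (T.rootPath_isPath a)

lemma IsAncestor.depth_eq_add_weight {a b : T.V} (h : T.IsAncestor a b) :
    T.depth b = T.depth a + T.weight ((T.rootPath b).dropUntil a h) := by
  rw [depth_eq_weight, depth_eq_weight, ← takeUntil_rootPath h, ← T.weight_append,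
    (T.rootPath b).take_spec h]

lemma IsAncestor.depth_lt {a b : T.V} (h : T.IsAncestor a b) (hab : a ≠ b) :
    T.depth a < T.depth b := by
  rw [h.depth_eq_add_weight]
  linarith [T.weight_pos ((T.rootPath b).dropUntil a h) hab]

lemma IsAncestor.antisymm {a b : T.V} (hab : T.IsAncestor a b) (hba : T.IsAncestor b a) :
    a = b := by
  by_contra hne
  exact (hab.depth_lt hne).asymm (hba.depth_lt (Ne.symm hne))

lemma IsAncestor.trans {a b c : T.V} (hab : T.IsAncestor a b) (hbc : T.IsAncestor b c) :
    T.IsAncestor a c := by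
  have hab' : a ∈ ((T.rootPath c).takeUntil b hbc).support := by
    rwa [takeUntil_rootPath hbc]
  exact Walk.support_takeUntil_subset_support _ hbc hab'

lemma IsAncestor.total {a b c : T.V} (hac : T.IsAncestor a c) (hbc : T.IsAncestor b c) :
    T.IsAncestor a b ∨ T.IsAncestor b a := by
  have ha := Walk.support_takeUntil_prefix_support _ hac
  have hb := Walk.support_takeUntil_prefix_support _ hbc
  rw [takeUntil_rootPath] at ha hb
  exact (List.prefix_or_prefix_of_prefix ha hb).imp
    (fun h => h.subset (Walk.end_mem_support _)) (fun h => h.subset (Walk.end_mem_support _))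

lemma isAncestor_or_isAncestor_of_adj {a b : T.V} (hab : T.G.Adj a b) :
    T.IsAncestor a b ∨ T.IsAncestor b a := by
  by_cases hb : T.IsAncestor b a
  · exact Or.inr hb
  · left
    rw [IsAncestor, ← T.eq_of_isPath ((T.rootPath_isPath a).concat hb hab) (T.rootPath_isPath b),
      Walk.support_concat]
    exact List.mem_append_left _ (Walk.end_mem_support _)

lemma exists_mem_support_isAncestor {x y : T.V} (p : T.G.Walk x y) :
    ∃ m ∈ p.support, T.IsAncestor m x ∧ T.IsAncestor m y := by
  induction p with
  | nil => exact ⟨_, Walk.start_mem_support _, isAncestor_refl _, isAncestor_refl _⟩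
  | @cons x x' y h q ih =>
    obtain ⟨m, hm, hmx', hmy⟩ := ih
    have hm' : m ∈ (Walk.cons h q).support := List.mem_cons_of_mem _ hm
    rcases isAncestor_or_isAncestor_of_adj h with hxx' | hx'x
    · rcases hxx'.total hmx' with hxm | hmx
      · exact ⟨x, Walk.start_mem_support _, isAncestor_refl x, hxm.trans hmy⟩
      · exact ⟨m, hm', hmx, hmy⟩
    · exact ⟨m, hm', hmx'.trans hx'x, hmy⟩

lemma IsAncestor.mem_support_of_isPath {a b c : T.V} (hab : T.IsAncestor a b)
    (hbc : T.IsAncestor b c) {p : T.G.Walk a c} (hp : p.IsPath) : b ∈ p.support := by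
  have hac := hab.trans hbc
  have hb : b ∈ (((T.rootPath c).takeUntil a hac).append
      ((T.rootPath c).dropUntil a hac)).support := by
    rw [(T.rootPath c).take_spec hac]; exact hbc
  rcases (Walk.mem_support_append_iff _ _).mp hb with hba | hb
  · rw [takeUntil_rootPath hac] at hba
    rw [← hab.antisymm hba]
    exact Walk.start_mem_support p
  · rwa [T.eq_of_isPath hp ((T.rootPath_isPath c).dropUntil hac)]

lemma IsSubtree.exists_walk_support_subset {S : Set T.V} (hS : T.IsSubtree S) {x y : T.V}
    (hx : x ∈ S) (hy : y ∈ S) : ∃ p : T.G.Walk x y, ∀ z ∈ p.support, z ∈ S := by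
  obtain ⟨p⟩ := hS.2.preconnected ⟨x, hx⟩ ⟨y, hy⟩
  refine ⟨p.map (Embedding.induce S).toHom, fun z hz => ?_⟩
  replace hz : z ∈ (p.map (Embedding.induce S).toHom).support := hz
  rw [Walk.support_map] at hz
  obtain ⟨z, -, rfl⟩ := List.mem_map.mp hz
  exact z.2

lemma IsSubtree.mem_of_isAncestor {S : Set T.V} (hS : T.IsSubtree S) {a b c : T.V}
    (ha : a ∈ S) (hc : c ∈ S) (hab : T.IsAncestor a b) (hbc : T.IsAncestor b c) : b ∈ S := by
  obtain ⟨p, hp⟩ := hS.exists_walk_support_subset ha hc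
  exact hp b (p.support_bypass_subset_support (hab.mem_support_of_isPath hbc p.bypass_isPath))

lemma IsSubtreeRoot.isAncestor {S : Set T.V} {r x : T.V} (hr : T.IsSubtreeRoot S r)
    (hS : T.IsSubtree S) (hx : x ∈ S) : T.IsAncestor r x := by
  obtain ⟨p, hp⟩ := hS.exists_walk_support_subset hr.1 hx
  obtain ⟨m, hm, hmr, hmx⟩ := exists_mem_support_isAncestor p
  obtain rfl : m = r := by
    by_contra hne
    exact (hmr.depth_lt hne).not_ge (hr.2 m (hp m hm))
  exact hmx

lemma IsSubtreeRoot.mem_of_depth_le {S₁ S₂ : Set T.V} {r₁ r₂ : T.V}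
    (hr₁ : T.IsSubtreeRoot S₁ r₁) (hr₂ : T.IsSubtreeRoot S₂ r₂) (hS₁ : T.IsSubtree S₁)
    (hS₂ : T.IsSubtree S₂) (hle : T.depth r₁ ≤ T.depth r₂) (hne : (S₁ ∩ S₂).Nonempty) :
    r₂ ∈ S₁ := by
  obtain ⟨y, hy₁, hy₂⟩ := hne
  have hr₂y := hr₂.isAncestor hS₂ hy₂
  rcases (hr₁.isAncestor hS₁ hy₁).total hr₂y with h₁₂ | h₂₁
  · exact hS₁.mem_of_isAncestor hr₁.1 hy₁ h₁₂ hr₂y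
  · obtain rfl : r₂ = r₁ := by
      by_contra hne
      exact (h₂₁.depth_lt hne).not_ge hle
    exact hr₁.1

lemma IsSubtreeRoot.exists_mem_inter_depth_le_max {S₁ S₂ : Set T.V} {r₁ r₂ : T.V}
    (hr₁ : T.IsSubtreeRoot S₁ r₁) (hr₂ : T.IsSubtreeRoot S₂ r₂) (hS₁ : T.IsSubtree S₁)
    (hS₂ : T.IsSubtree S₂) (hne : (S₁ ∩ S₂).Nonempty) :
    ∃ z ∈ S₁ ∩ S₂, T.depth z ≤ max (T.depth r₁) (T.depth r₂) := by
  rcases le_total (T.depth r₁) (T.depth r₂) with h | h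
  · exact ⟨r₂, ⟨hr₁.mem_of_depth_le hr₂ hS₁ hS₂ h hne, hr₂.1⟩, le_max_right _ _⟩
  · rw [Set.inter_comm] at hne
    exact ⟨r₁, ⟨hr₁.1, hr₂.mem_of_depth_le hr₁ hS₂ hS₁ h hne⟩, le_max_left _ _⟩

lemma Overshadows.mem_of_depth_le {S₁ S₂ : Set T.V} (h : T.Overshadows S₁ S₂) {x y : T.V}
    (hx : x ∈ S₂) (hy : y ∈ S₂ ∩ S₁) (hxy : T.depth x ≤ T.depth y) : x ∈ S₁ := by
  by_contra hx₁
  exact (h x ⟨hx, hx₁⟩ y hy).not_ge hxy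

lemma Overshadows.inter_nonempty {Sa Sb Sw : Set T.V} (h : T.Overshadows Sb Sa)
    {ra rw p : T.V} (hra : T.IsSubtreeRoot Sa ra) (hrw : T.IsSubtreeRoot Sw rw)
    (hSa : T.IsSubtree Sa) (hSw : T.IsSubtree Sw) (hp : p ∈ Sa ∩ Sb)
    (hrwp : T.depth rw ≤ T.depth p) (hne : (Sa ∩ Sw).Nonempty) : (Sb ∩ Sw).Nonempty := by
  obtain ⟨z, ⟨hza, hzw⟩, hz⟩ := hra.exists_mem_inter_depth_le_max hrw hSa hSw hne
  exact ⟨z, h.mem_of_depth_le hza hp (hz.trans (max_le (hra.2 p hp.1) hrwp)), hzw⟩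

end HostTree

lemma IsTreeRep.mem_closedNbhd_iff {α : Type*} {G : SimpleGraph α} {T : HostTree}
    {t : α → Set T.V} (h : IsTreeRep G T t) {u v : α} :
    u ∈ closedNbhd G v ↔ (t v ∩ t u).Nonempty := by
  by_cases huv : u = v
  · subst huv
    simpa [closedNbhd] using (h.1 u).1
  · simp only [closedNbhd, Set.mem_insert_iff, huv, false_or, mem_neighborSet]
    exact h.2 v u (Ne.symm huv)

lemma IsCompatibleTreeRep.isSimpleVertex {α : Type*} {G : SimpleGraph α} {T : HostTree}
    {t : α → Set T.V} (h : IsCompatibleTreeRep G T t) {rt : α → T.V}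
    (hrt : ∀ v : α, T.IsSubtreeRoot (t v) (rt v)) {v : α}
    (hv : ∀ u : α, T.depth (rt u) ≤ T.depth (rt v)) : IsSimpleVertex G v := by
  have hroot : ∀ u ∈ closedNbhd G v, rt v ∈ t u := fun u hu =>
    (hrt u).mem_of_depth_le (hrt v) (h.1.1 u) (h.1.1 v) (hv u)
      (Set.inter_comm _ _ ▸ h.1.mem_closedNbhd_iff.mp hu)
  have hsubset : ∀ a ∈ closedNbhd G v, ∀ b ∈ closedNbhd G v,
      T.Overshadows (t b) (t a) → closedNbhd G a ⊆ closedNbhd G b := by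
    intro a ha b hb hab w hw
    rw [h.1.mem_closedNbhd_iff] at hw ⊢
    exact hab.inter_nonempty (hrt a) (hrt w) (h.1.1 a) (h.1.1 w) ⟨hroot a ha, hroot b hb⟩
      (hv w) hw
  intro u₁ hu₁ u₂ hu₂
  rcases h.2 u₁ u₂ with h₁₂ | h₂₁
  · exact Or.inr (hsubset u₂ hu₂ u₁ hu₁ h₁₂)
  · exact Or.inl (hsubset u₁ hu₁ u₂ hu₂ h₂₁)

/-- In a compatible tree representation of a (nonempty) graph `G`, every vertex
whose subtree root has maximum depth is simple; in particular `G` has a simple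
vertex. -/
theorem compatibleTreeRep_simple_vertex {α : Type} [Fintype α] [Nonempty α]
    (G : SimpleGraph α) (T : HostTree) (t : α → Set T.V)
    (h : IsCompatibleTreeRep G T t)
    (rt : α → T.V) (hrt : ∀ v : α, T.IsSubtreeRoot (t v) (rt v)) :
    (∀ v : α, (∀ u : α, T.depth (rt u) ≤ T.depth (rt v)) → IsSimpleVertex G v) ∧
    (∃ v : α, IsSimpleVertex G v) := by
  have hsimple : ∀ v : α, (∀ u : α, T.depth (rt u) ≤ T.depth (rt v)) → IsSimpleVertex G v :=
    fun _ hv => h.isSimpleVertex hrt hv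
  obtain ⟨v, hv⟩ := Finite.exists_max (fun u => T.depth (rt u))
  exact ⟨hsimple, v, hsimple v hv⟩
end

section
/- Let {T(v)} be a tree representation of a finite simple graph G. If v and w are adjacent in G and T(v) overshadows T(w), then d(𝐯) ≤ d(𝐰), and in particular the root 𝐰 of T(w) belongs to T(v). -/
theorem IsTreeRep.inter_nonempty_of_adj {α : Type*} {G : SimpleGraph α} {T : HostTree}
    {t : α → Set T.V} (h : IsTreeRep G T t) {u v : α} (huv : G.Adj u v) :
    (t u ∩ t v).Nonempty :=
  (h.2 u v huv.ne).mp huv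

theorem HostTree.Overshadows.subtreeRoot_mem {T : HostTree} {S₁ S₂ : Set T.V} {r : T.V}
    (hov : T.Overshadows S₁ S₂) (hmeet : (S₁ ∩ S₂).Nonempty) (hr : T.IsSubtreeRoot S₂ r) :
    r ∈ S₁ := by
  obtain ⟨z, hz₁, hz₂⟩ := hmeet
  by_contra hr₁
  exact (hov r ⟨hr.1, hr₁⟩ z ⟨hz₂, hz₁⟩).not_ge (hr.2 z hz₂)

theorem overshadow_adj_root_depth_le_general {α : Type} (G : SimpleGraph α)
    (T : HostTree) (t : α → Set T.V) (h : IsTreeRep G T t)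
    (rt : α → T.V) (hrt : ∀ u : α, T.IsSubtreeRoot (t u) (rt u))
    (v w : α) (hadj : G.Adj v w) (hov : T.Overshadows (t v) (t w)) :
    T.depth (rt v) ≤ T.depth (rt w) ∧ rt w ∈ t v := by
  have hwv : rt w ∈ t v := hov.subtreeRoot_mem (h.inter_nonempty_of_adj hadj) (hrt w)
  exact ⟨(hrt v).2 _ hwv, hwv⟩

/-- In a tree representation, if `v` and `w` are adjacent and `T(v)`
overshadows `T(w)`, then `d(𝐯) ≤ d(𝐰)` and the root of `T(w)` lies in `T(v)`. -/
theorem overshadow_adj_root_depth_le {α : Type} [Fintype α] (G : SimpleGraph α)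
    (T : HostTree) (t : α → Set T.V) (h : IsTreeRep G T t)
    (rt : α → T.V) (hrt : ∀ u : α, T.IsSubtreeRoot (t u) (rt u))
    (v w : α) (hadj : G.Adj v w) (hov : T.Overshadows (t v) (t w)) :
    T.depth (rt v) ≤ T.depth (rt w) ∧ rt w ∈ t v :=
  overshadow_adj_root_depth_le_general G T t h rt hrt v w hadj hov
end

section
/- Let v₁,…,vₙ (n ≥ 1) be a perfect elimination order of a finite simple graph G, and perform Farber's construction: for each j < n let p(j) = min{k : k > j and v_k ∈ N[v_j]} if such k exists and p(j) = n otherwise; let T_G be the graph on nodes v₁,…,vₙ with edges {v_j, v_{p(j)}} for j = 1,…,n−1; and for each ℓ let T_ℓ = {v_i : i ≤ ℓ and v_i ∈ N[v_ℓ]}. Then: (a) T_G is a tree; (b) along the unique path in T_G from any v_j to vₙ the indices strictly increase; (c) each set T_ℓ induces a connected subgraph of T_G; and (d) for all k ≠ ℓ, the vertices v_k and v_ℓ are adjacent in G if and only if T_k ∩ T_ℓ ≠ ∅. -/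
/-- A perfect elimination order: for each `i`, the later neighbours of `vᵢ`
form a clique. -/
def IsPerfectElimOrder {α : Type*} (G : SimpleGraph α) {n : ℕ} (σ : Fin n ≃ α) : Prop :=
  ∀ i j k : Fin n, i < j → i < k → j ≠ k →
    G.Adj (σ i) (σ j) → G.Adj (σ i) (σ k) → G.Adj (σ j) (σ k)

/-- Farber's host graph: nodes `0,…,n-1` with an edge from each non-last node
`j` to `p j`. -/
def farberTG (n : ℕ) (p : Fin n → Fin n) : SimpleGraph (Fin n) :=
  SimpleGraph.fromRel (fun a b => (a : ℕ) < n - 1 ∧ b = p a)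

/-- Farber's subtree for the vertex `v_ℓ`: the indices `i ≤ ℓ` with
`v_i ∈ N[v_ℓ]`. -/
def farberSub {α : Type*} (G : SimpleGraph α) {n : ℕ} (σ : Fin n ≃ α)
    (l : Fin n) : Set (Fin n) :=
  {i : Fin n | i ≤ l ∧ σ i ∈ closedNbhd G (σ l)}

/-!
Every node `j < n - 1` of `T_G` has exactly one larger neighbour, namely `p j`. Climbing along
`p` reaches the last node from anywhere, so `T_G` is connected; at the least vertex of a cycle
both cycle-neighbours would be larger, so `T_G` is acyclic; and the climbing path, being
increasing, is the unique path to the last node. For `i ∈ T_ℓ` with `i < ℓ`, both `v_{p i}` and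
`v_ℓ` are later neighbours of `v_i`, hence adjacent, so `p i ∈ T_ℓ` and climbing stays inside
`T_ℓ`. Likewise a common element `i` of `T_k` and `T_ℓ` makes `v_k` and `v_ℓ` later neighbours
of `v_i`, hence adjacent.
-/

namespace SimpleGraph

variable {V : Type*} {G : SimpleGraph V}

theorem Walk.isPath_of_isChain_lt [Preorder V] {u v : V} {q : G.Walk u v}
    (hq : q.support.IsChain (· < ·)) : q.IsPath :=
  (Walk.isPath_def q).2 (hq.pairwise.imp ne_of_lt)

theorem exists_walk_isChain_lt_of_exists_gt_adj [LinearOrder V] [Finite V] {t : V}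
    (h : ∀ v, v ≠ t → ∃ w, v < w ∧ G.Adj v w) (v : V) :
    ∃ q : G.Walk v t, q.support.IsChain (· < ·) := by
  induction v using WellFoundedGT.induction with
  | _ v ih =>
    by_cases hvt : v = t
    · subst hvt
      exact ⟨.nil, List.isChain_singleton v⟩
    obtain ⟨w, hvw, hadj⟩ := h v hvt
    obtain ⟨q, hq⟩ := ih w hvw
    refine ⟨.cons hadj q, ?_⟩
    rw [Walk.support_cons, ← q.cons_tail_support] at *
    exact hq.cons_cons hvw

theorem connected_of_exists_gt_adj [LinearOrder V] [Finite V] (t : V)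
    (h : ∀ v, v ≠ t → ∃ w, v < w ∧ G.Adj v w) : G.Connected := by
  have reach (v : V) : G.Reachable v t :=
    let ⟨q, _⟩ := exists_walk_isChain_lt_of_exists_gt_adj h v; q.reachable
  exact (connected_iff G).2 ⟨fun u v => (reach u).trans (reach v).symm, ⟨t⟩⟩

theorem isAcyclic_of_gt_adj_unique [LinearOrder V]
    (h : ∀ v x y, v < x → v < y → G.Adj v x → G.Adj v y → x = y) : G.IsAcyclic := by
  intro u c hc
  set m := c.support.toFinset.min' ⟨u, List.mem_toFinset.2 c.start_mem_support⟩
  have hm : m ∈ c.support := List.mem_toFinset.1 (Finset.min'_mem _ _)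
  -- A cycle has two neighbours at its least vertex, both above it.
  have hnbr : c.toSubgraph.neighborSet m ⊆ {x | m < x ∧ G.Adj m x} := by
    intro x hx
    have hxc : x ∈ c.support := c.mem_support_of_adj_toSubgraph hx.symm
    have hadj := c.toSubgraph.adj_sub hx
    exact ⟨lt_of_le_of_ne (Finset.min'_le _ _ (List.mem_toFinset.2 hxc)) hadj.ne, hadj⟩
  have hsub : {x | m < x ∧ G.Adj m x}.Subsingleton := fun x hx y hy => h m x y hx.1 hy.1 hx.2 hy.2
  have htwo := hc.ncard_neighborSet_toSubgraph_eq_two hm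
  have hle := (Set.ncard_le_one (Set.finite_of_ncard_pos (htwo ▸ two_pos))).2 (hsub.anti hnbr)
  omega

end SimpleGraph

open SimpleGraph

section FarberTree

variable {n : ℕ} {p : Fin n → Fin n}

theorem farberTG_adj_parent {j : Fin n} (hj : (j : ℕ) < n - 1) (hjp : j < p j) :
    (farberTG n p).Adj j (p j) :=
  (fromRel_adj ..).2 ⟨hjp.ne, .inl ⟨hj, rfl⟩⟩

theorem farberTG_eq_parent_of_adj_of_lt (hp : ∀ j : Fin n, (j : ℕ) < n - 1 → j < p j)
    {a x : Fin n} (hadj : (farberTG n p).Adj a x) (hax : a < x) : x = p a := by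
  obtain ⟨-, ⟨-, hx⟩ | ⟨hx, ha⟩⟩ := (fromRel_adj ..).1 hadj
  · exact hx
  · exact absurd (ha ▸ hp x hx) hax.not_gt

theorem farberTG_exists_gt_adj (hp : ∀ j : Fin n, (j : ℕ) < n - 1 → j < p j)
    {t : Fin n} (ht : (t : ℕ) = n - 1) (v : Fin n) (hvt : v ≠ t) :
    ∃ w, v < w ∧ (farberTG n p).Adj v w := by
  have hv : (v : ℕ) < n - 1 := by
    have := Fin.val_ne_of_ne hvt
    omega
  exact ⟨p v, hp v hv, farberTG_adj_parent hv (hp v hv)⟩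

theorem farberTG_isTree (hn : 1 ≤ n) (hp : ∀ j : Fin n, (j : ℕ) < n - 1 → j < p j) :
    (farberTG n p).IsTree :=
  ⟨connected_of_exists_gt_adj ⟨n - 1, by omega⟩ (farberTG_exists_gt_adj hp rfl),
    isAcyclic_of_gt_adj_unique fun _ _ _ hx hy hadjx hadjy =>
    (farberTG_eq_parent_of_adj_of_lt hp hadjx hx).trans
      (farberTG_eq_parent_of_adj_of_lt hp hadjy hy).symm⟩

theorem farberTG_isChain_of_isPath (hn : 1 ≤ n) (hp : ∀ j : Fin n, (j : ℕ) < n - 1 → j < p j)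
    {j t : Fin n} (ht : (t : ℕ) = n - 1) (q : (farberTG n p).Walk j t) (hq : q.IsPath) :
    q.support.IsChain (· < ·) := by
  obtain ⟨r, hr⟩ := exists_walk_isChain_lt_of_exists_gt_adj (farberTG_exists_gt_adj hp ht) j
  have := (farberTG_isTree hn hp).isAcyclic.subsingleton_path j t
  have hqr : q = r :=
    congrArg Subtype.val (Subsingleton.elim ⟨q, hq⟩ ⟨r, r.isPath_of_isChain_lt hr⟩)
  exact hqr ▸ hr

end FarberTree

section FarberSub

variable {α : Type*} {G : SimpleGraph α} {n : ℕ} {σ : Fin n ≃ α}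

theorem mem_closedNbhd_iff_adj {u v : α} (huv : u ≠ v) : u ∈ closedNbhd G v ↔ G.Adj v u := by
  simp [closedNbhd, huv]

theorem self_mem_farberSub (l : Fin n) : l ∈ farberSub G σ l :=
  ⟨le_rfl, Set.mem_insert _ _⟩

theorem mem_farberSub_iff_of_ne {i l : Fin n} (hil : i ≠ l) :
    i ∈ farberSub G σ l ↔ i < l ∧ G.Adj (σ i) (σ l) := by
  change i ≤ l ∧ σ i ∈ closedNbhd G (σ l) ↔ _
  rw [mem_closedNbhd_iff_adj (σ.injective.ne hil), G.adj_comm,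
    le_iff_lt_or_eq, or_iff_left hil]

theorem adj_iff_farberSub_inter_nonempty (hσ : IsPerfectElimOrder G σ) {k l : Fin n}
    (hkl : k ≠ l) : G.Adj (σ k) (σ l) ↔ (farberSub G σ k ∩ farberSub G σ l).Nonempty := by
  constructor
  · intro hadj
    rcases hkl.lt_or_gt with hlt | hgt
    · exact ⟨k, self_mem_farberSub k, (mem_farberSub_iff_of_ne hkl).2 ⟨hlt, hadj⟩⟩
    · exact ⟨l, (mem_farberSub_iff_of_ne hkl.symm).2 ⟨hgt, hadj.symm⟩, self_mem_farberSub l⟩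
  · rintro ⟨i, hik, hil⟩
    by_cases hik' : i = k
    · subst hik'
      exact ((mem_farberSub_iff_of_ne hkl).1 hil).2
    by_cases hil' : i = l
    · subst hil'
      exact ((mem_farberSub_iff_of_ne hkl.symm).1 hik).2.symm
    obtain ⟨hik, hadjk⟩ := (mem_farberSub_iff_of_ne hik').1 hik
    obtain ⟨hil, hadjl⟩ := (mem_farberSub_iff_of_ne hil').1 hil
    exact hσ i k l hik hil hkl hadjk hadjl

variable {p : Fin n → Fin n}

theorem parent_mem_farberSub (hσ : IsPerfectElimOrder G σ)
    (hp1 : ∀ j : Fin n, (∃ k : Fin n, j < k ∧ G.Adj (σ j) (σ k)) →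
      (j < p j ∧ G.Adj (σ j) (σ (p j)) ∧
        ∀ k : Fin n, j < k → G.Adj (σ j) (σ k) → p j ≤ k))
    {i l : Fin n} (hi : i ∈ farberSub G σ l) (hil : i ≠ l) :
    p i ∈ farberSub G σ l := by
  obtain ⟨hlt, hadj⟩ := (mem_farberSub_iff_of_ne hil).1 hi
  obtain ⟨hip, hadjp, hpmin⟩ := hp1 i ⟨l, hlt, hadj⟩
  by_cases hpl : p i = l
  · rw [hpl]
    exact self_mem_farberSub l
  exact (mem_farberSub_iff_of_ne hpl).2
    ⟨(hpmin l hlt hadj).lt_of_ne hpl, hσ i (p i) l hip hlt hpl hadjp hadj⟩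

theorem farberSub_induce_connected (hσ : IsPerfectElimOrder G σ)
    (hp1 : ∀ j : Fin n, (∃ k : Fin n, j < k ∧ G.Adj (σ j) (σ k)) →
      (j < p j ∧ G.Adj (σ j) (σ (p j)) ∧
        ∀ k : Fin n, j < k → G.Adj (σ j) (σ k) → p j ≤ k))
    (l : Fin n) : ((farberTG n p).induce (farberSub G σ l)).Connected := by
  refine connected_of_exists_gt_adj ⟨l, self_mem_farberSub l⟩ ?_
  rintro ⟨i, hi⟩ hil
  have hil : i ≠ l := fun h => hil (Subtype.ext h)
  obtain ⟨hlt, hadj⟩ := (mem_farberSub_iff_of_ne hil).1 hi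
  have hip := (hp1 i ⟨l, hlt, hadj⟩).1
  refine ⟨⟨p i, parent_mem_farberSub hσ hp1 hi hil⟩, hip, farberTG_adj_parent ?_ hip⟩
  change (i : ℕ) < n - 1
  have : (i : ℕ) < l := hlt
  have := l.isLt
  omega

end FarberSub

theorem lt_parent_of_farber {α : Type*} {G : SimpleGraph α} {n : ℕ} {σ : Fin n ≃ α}
    {p : Fin n → Fin n}
    (hp1 : ∀ j : Fin n, (∃ k : Fin n, j < k ∧ G.Adj (σ j) (σ k)) → j < p j)
    (hp2 : ∀ j : Fin n, (¬ ∃ k : Fin n, j < k ∧ G.Adj (σ j) (σ k)) → ((p j : ℕ) = n - 1))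
    (j : Fin n) (hj : (j : ℕ) < n - 1) : j < p j := by
  by_cases hex : ∃ k : Fin n, j < k ∧ G.Adj (σ j) (σ k)
  · exact hp1 j hex
  · exact Fin.lt_def.2 (hp2 j hex ▸ hj)

/-- Farber's construction from a perfect elimination order yields a tree, in
which indices strictly increase along the path from any node to the last one,
whose sets `T_ℓ` induce connected subgraphs, and which represents `G` by
intersections. -/
theorem farber_construction {α : Type} (G : SimpleGraph α)
    {n : ℕ} (hn : 1 ≤ n) (σ : Fin n ≃ α) (hσ : IsPerfectElimOrder G σ)
    (p : Fin n → Fin n)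
    (hp1 : ∀ j : Fin n, (∃ k : Fin n, j < k ∧ G.Adj (σ j) (σ k)) →
      (j < p j ∧ G.Adj (σ j) (σ (p j)) ∧
        ∀ k : Fin n, j < k → G.Adj (σ j) (σ k) → p j ≤ k))
    (hp2 : ∀ j : Fin n, (¬ ∃ k : Fin n, j < k ∧ G.Adj (σ j) (σ k)) →
      ((p j : ℕ) = n - 1)) :
    (farberTG n p).IsTree ∧
    (∀ (j : Fin n) (q : (farberTG n p).Walk j ⟨n - 1, by omega⟩),
      q.IsPath → q.support.Chain' (· < ·)) ∧
    (∀ l : Fin n, ((farberTG n p).induce (farberSub G σ l)).Connected) ∧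
    (∀ k l : Fin n, k ≠ l →
      (G.Adj (σ k) (σ l) ↔ (farberSub G σ k ∩ farberSub G σ l).Nonempty)) := by
  have hp := lt_parent_of_farber (fun j hj => (hp1 j hj).1) hp2
  exact ⟨farberTG_isTree hn hp, fun j q hq => farberTG_isChain_of_isPath hn hp rfl q hq,
    farberSub_induce_connected hσ hp1, fun k l hkl => adj_iff_farberSub_inter_nonempty hσ hkl⟩
end
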